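/- For every real d ≥ 0 one has Λ(d) ≥ 1 + (4/τ̃)·d, where τ̃ = 2(N−1)/(N−2). -/

import Mathlib

open Real

/-! With `s = d + √(d² + 1) ≥ 1 + d`, `c = N/(N-2)` and `τ̃ = 1 + c`, convexity of `t ↦ s^t`
(weighted AM–GM with weights `1/τ̃`, `c/τ̃`) gives `Λ(d) ≥ s^(4/τ̃)`, and Bernoulli's inequality
with exponent `4/τ̃ ≥ 1` gives `s^(4/τ̃) ≥ (1 + d)^(4/τ̃) ≥ 1 + (4/τ̃) d`. -/

namespace Real

lemma rpow_add_mul_div_one_add_le {s c : ℝ} (hs : 0 < s) (hc : 0 ≤ c) (a b : ℝ) :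
    s ^ ((a + c * b) / (1 + c)) ≤ (s ^ a + c * s ^ b) / (1 + c) := by
  have hc1 : 0 < 1 + c := by linarith
  have amgm := geom_mean_le_arith_mean2_weighted (w₁ := 1 / (1 + c)) (w₂ := c / (1 + c))
    (by positivity) (by positivity) (rpow_pos_of_pos hs a).le (rpow_pos_of_pos hs b).le
    (by field_simp)
  rw [← rpow_mul hs.le, ← rpow_mul hs.le, ← rpow_add hs] at amgm
  convert amgm using 2 <;> field_simp

lemma rpow_mul_add_mul_div_one_add_le {s c p : ℝ} (hs : 0 < s) (hc : 0 ≤ c) (hp : 0 ≤ p)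
    (a b : ℝ) : s ^ (p * ((a + c * b) / (1 + c))) ≤ ((s ^ a + c * s ^ b) / (1 + c)) ^ p := by
  rw [mul_comm, rpow_mul hs.le]
  exact rpow_le_rpow (rpow_pos_of_pos hs _).le (rpow_add_mul_div_one_add_le hs hc a b) hp

lemma one_add_le_add_sqrt_sq_add_one (d : ℝ) : 1 + d ≤ d + √(d ^ 2 + 1) := by
  have : 1 ≤ √(d ^ 2 + 1) := one_le_sqrt.mpr (by nlinarith)
  linarith

end Real

theorem stmt_2 (N : ℕ) (hN : 5 ≤ N) :
    let τ : ℝ := 2 * ((N : ℝ) - 1) / ((N : ℝ) - 2)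
    let Λ : ℝ → ℝ := fun d =>
      τ ^ (-(2 / (N : ℝ))) *
        ((d + Real.sqrt (d ^ 2 + 1)) ^ (N : ℝ)
          + ((2 * (N : ℝ) / ((N : ℝ) - 2)) / 2) * (d + Real.sqrt (d ^ 2 + 1)) ^ ((N : ℝ) - 2))
          ^ (2 / (N : ℝ))
    ∀ d : ℝ, 0 ≤ d → 1 + (4 / τ) * d ≤ Λ d := by
  intro τ Λ d hd
  have hN' : (5 : ℝ) ≤ N := by exact_mod_cast hN
  have hN2 : (N : ℝ) - 2 ≠ 0 := by linarith
  set s := d + √(d ^ 2 + 1)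
  set c : ℝ := N / (N - 2)
  have hs : 1 + d ≤ s := one_add_le_add_sqrt_sq_add_one d
  have hc : 0 ≤ c := div_nonneg (by linarith) (by linarith)
  have hτ : τ = 1 + c := by simp only [τ, c]; field_simp; ring
  have hτ0 : 0 < τ := by rw [hτ]; linarith
  have hθ : 1 ≤ 4 / τ := by
    rw [le_div_iff₀ hτ0, one_mul, hτ, ← le_sub_iff_add_le', div_le_iff₀ (by linarith)]
    linarith
  have hΛ : Λ d = ((s ^ (N : ℝ) + c * s ^ ((N : ℝ) - 2)) / τ) ^ (2 / (N : ℝ)) := by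
    have hA : 0 ≤ s ^ (N : ℝ) + c * s ^ ((N : ℝ) - 2) := by positivity
    have hcoef : 2 * (N : ℝ) / (N - 2) / 2 = c := by ring
    simp only [Λ]
    rw [hcoef, div_rpow hA hτ0.le, rpow_neg hτ0.le]
    exact (div_eq_inv_mul _ _).symm
  have hexp : 4 / τ = 2 / N * ((N + c * (N - 2)) / (1 + c)) := by
    rw [div_mul_cancel₀ _ hN2, ← hτ]
    field_simp
    ring
  calc 1 + (4 / τ) * d ≤ (1 + d) ^ (4 / τ) := one_add_mul_self_le_rpow_one_add (by linarith) hθ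
    _ ≤ s ^ (4 / τ) := rpow_le_rpow (by linarith) hs (by linarith)
    _ ≤ Λ d := by
      rw [hΛ, hexp, hτ]
      exact rpow_mul_add_mul_div_one_add_le (by linarith) hc (by positivity) _ _
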